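/- Let P = (ρ₁ e^{iθ₁}, ρ₂ e^{iθ₂}) ∈ ℂ² with ρ₁, ρ₂ ≥ 0 and ρ₁ ≠ ρ₂. If P₁ and P₂ are points of Γ with |P₁ − P| = |P₂ − P| = dist(P, Γ), then P₁ = P₂; that is, points whose two complex coordinates have distinct moduli have a unique closest point on Γ. -/

import Mathlib

noncomputable section

open Complex Metric
open scoped Real

/-- ℂ² with the Euclidean (ℝ⁴) distance. -/
abbrev C2 : Type := EuclideanSpace ℂ (Fin 2)

/-- The point (z, w) ∈ ℂ². -/
def pt (z w : ℂ) : C2 := (WithLp.equiv 2 (Fin 2 → ℂ)).symm ![z, w]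

/-- The point of Γ with parameters (ρ, θ). -/
def gpt (ρ θ : ℝ) : C2 :=
  pt (((Real.sqrt 2 / 2 * ρ : ℝ) : ℂ) * Complex.exp ((θ : ℂ) * Complex.I))
     (((Real.sqrt 2 / 2 * ρ⁻¹ : ℝ) : ℂ) * Complex.exp ((θ : ℂ) * Complex.I))

/-- The special Lagrangian surface Γ ⊂ ℂ². -/
def Gam : Set C2 := {p | ∃ ρ θ : ℝ, 0 < ρ ∧ p = gpt ρ θ}

/-- The point (ρ₁ e^{iθ₁}, ρ₂ e^{iθ₂}) ∈ ℂ². -/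
def ppt (ρ₁ θ₁ ρ₂ θ₂ : ℝ) : C2 :=
  pt ((ρ₁ : ℂ) * Complex.exp ((θ₁ : ℂ) * Complex.I))
     ((ρ₂ : ℂ) * Complex.exp ((θ₂ : ℂ) * Complex.I))

/-! A point of Γ is `(√2/2)(r u, r⁻¹ u)` with `r > 0`, `|u| = 1`, and its squared distance to
`P = (z, w)` is `|z|² + |w|² + (r² + r⁻²)/2 - √2 ⟪u, v⟫` with `v = r z + r⁻¹ w` (`scaledSum`).
For fixed `r` this is minimal exactly at `u = v / |v|` (if `v ≠ 0`), which leaves the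
one-variable function `E(r) = (r² + r⁻²)/2 - √2 |v|` (`reducedSqDist √2 z w`). If `|w| < |z|`,
then `E(1/r) < E(r)` for `r < 1` and `E'(1) < 0`, so every minimiser of `E` has `r > 1`. There
the critical equation reads `|v| = √2 (|z|² + (|z|² - |w|²)/(r⁴ - 1))`: its left side is strictly
increasing in `r` and its right side strictly decreasing, so the minimiser is unique, and then so
is `u`. The case `|z| < |w|` is the same under the symmetry `(z, w, r) ↦ (w, z, 1/r)`. -/

open Set
open scoped RealInnerProductSpace

section ScaledSum

variable {F : Type*} [NormedAddCommGroup F] [InnerProductSpace ℝ F]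

def scaledSum (z w : F) (r : ℝ) : F := r • z + r⁻¹ • w

def reducedSqDist (k : ℝ) (z w : F) (r : ℝ) : ℝ :=
  (r ^ 2 + r⁻¹ ^ 2) / 2 - k * ‖scaledSum z w r‖

variable {k : ℝ} {z w : F}

lemma scaledSum_inv (z w : F) (r : ℝ) : scaledSum w z r⁻¹ = scaledSum z w r := by
  simp only [scaledSum, inv_inv, add_comm]

lemma reducedSqDist_inv (k : ℝ) (z w : F) (r : ℝ) :
    reducedSqDist k w z r⁻¹ = reducedSqDist k z w r := by
  simp only [reducedSqDist, scaledSum_inv, inv_inv, add_comm]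

lemma isMinOn_reducedSqDist_inv {r : ℝ} (h : IsMinOn (reducedSqDist k z w) (Ioi 0) r) :
    IsMinOn (reducedSqDist k w z) (Ioi 0) r⁻¹ := fun s hs => by
  change reducedSqDist k w z r⁻¹ ≤ reducedSqDist k w z s
  rw [reducedSqDist_inv, ← inv_inv s, reducedSqDist_inv]
  exact h (mem_Ioi.2 (inv_pos.2 hs))

lemma norm_scaledSum_sq {r : ℝ} (hr : r ≠ 0) :
    ‖scaledSum z w r‖ ^ 2 = r ^ 2 * ‖z‖ ^ 2 + r⁻¹ ^ 2 * ‖w‖ ^ 2 + 2 * ⟪z, w⟫ := by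
  rw [scaledSum, norm_add_sq_real, norm_smul, norm_smul, real_inner_smul_left,
    real_inner_smul_right, Real.norm_eq_abs, Real.norm_eq_abs, mul_pow, mul_pow, sq_abs, sq_abs]
  field_simp
  ring

lemma norm_scaledSum_lt (hzw : ‖w‖ < ‖z‖) {s t : ℝ} (hs : 0 < s) (hst : s < t)
    (hst1 : 1 ≤ s * t) : ‖scaledSum z w s‖ < ‖scaledSum z w t‖ := by
  have ht : 0 < t := hs.trans hst
  have hdiff : ‖scaledSum z w t‖ ^ 2 - ‖scaledSum z w s‖ ^ 2
      = (t ^ 2 - s ^ 2) * (‖z‖ ^ 2 - ‖w‖ ^ 2 / (s * t) ^ 2) := by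
    rw [norm_scaledSum_sq ht.ne', norm_scaledSum_sq hs.ne']
    field_simp
    ring
  have hw : ‖w‖ ^ 2 / (s * t) ^ 2 < ‖z‖ ^ 2 :=
    (div_le_self (sq_nonneg _) (one_le_pow₀ hst1)).trans_lt (by gcongr)
  have hpos : 0 < (t ^ 2 - s ^ 2) * (‖z‖ ^ 2 - ‖w‖ ^ 2 / (s * t) ^ 2) :=
    mul_pos (by nlinarith) (by linarith)
  exact lt_of_pow_lt_pow_left₀ 2 (norm_nonneg _) (by linarith)

lemma scaledSum_ne_zero (hzw : ‖w‖ < ‖z‖) {r : ℝ} (hr : 1 ≤ r) : scaledSum z w r ≠ 0 := by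
  have hr0 : 0 < r := one_pos.trans_le hr
  have hlt : r⁻¹ * ‖w‖ < r * ‖z‖ :=
    calc r⁻¹ * ‖w‖ ≤ 1 * ‖w‖ := by gcongr; exact inv_le_one_of_one_le₀ hr
      _ < 1 * ‖z‖ := by rw [one_mul, one_mul]; exact hzw
      _ ≤ r * ‖z‖ := by gcongr
  intro h
  have := congrArg norm (eq_neg_of_add_eq_zero_left h)
  rw [norm_neg, norm_smul, norm_smul, Real.norm_of_nonneg hr0.le,
    Real.norm_of_nonneg (inv_pos.2 hr0).le] at this
  exact hlt.ne' this

lemma hasDerivAt_scaledSum {r : ℝ} (hr : r ≠ 0) :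
    HasDerivAt (scaledSum z w) (z - r⁻¹ ^ 2 • w) r := by
  have := ((hasDerivAt_id r).smul_const z).add ((hasDerivAt_inv hr).smul_const w)
  refine this.congr_deriv ?_
  simp only [one_smul, neg_smul, inv_pow, sub_eq_add_neg]

lemma hasDerivAt_norm_scaledSum {r : ℝ} (hr : r ≠ 0) (hv : scaledSum z w r ≠ 0) :
    HasDerivAt (‖scaledSum z w ·‖)
      ((r * ‖z‖ ^ 2 - r⁻¹ ^ 3 * ‖w‖ ^ 2) / ‖scaledSum z w r‖) r := by
  have hsq := (hasDerivAt_scaledSum (z := z) (w := w) hr).norm_sq.sqrt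
    (pow_ne_zero 2 (norm_ne_zero_iff.2 hv))
  simp only [Real.sqrt_sq (norm_nonneg _)] at hsq
  convert hsq using 1
  rw [scaledSum, inner_add_left, inner_sub_right, inner_sub_right]
  simp only [real_inner_smul_left, real_inner_smul_right, real_inner_self_eq_norm_sq,
    real_inner_comm w z]
  field_simp
  ring

lemma hasDerivAt_reducedSqDist {r : ℝ} (hr : r ≠ 0) (hv : scaledSum z w r ≠ 0) :
    HasDerivAt (reducedSqDist k z w)
      (r - r⁻¹ ^ 3 - k * ((r * ‖z‖ ^ 2 - r⁻¹ ^ 3 * ‖w‖ ^ 2) / ‖scaledSum z w r‖)) r := by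
  have := (((hasDerivAt_pow 2 r).add ((hasDerivAt_inv hr).pow 2)).div_const 2).sub
    ((hasDerivAt_norm_scaledSum hr hv).const_mul k)
  refine this.congr_deriv ?_
  push_cast
  field_simp
  ring

lemma norm_scaledSum_mul_of_isLocalMin {r : ℝ} (hr : 0 < r) (hv : scaledSum z w r ≠ 0)
    (h : IsLocalMin (reducedSqDist k z w) r) :
    ‖scaledSum z w r‖ * (r ^ 4 - 1) = k * (r ^ 4 * ‖z‖ ^ 2 - ‖w‖ ^ 2) := by
  have hderiv := h.hasDerivAt_eq_zero (hasDerivAt_reducedSqDist hr.ne' hv)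
  have hN : 0 < ‖scaledSum z w r‖ := norm_pos_iff.2 hv
  field_simp at hderiv
  linear_combination hderiv

lemma one_lt_of_isMinOn (hk : 0 < k) (hzw : ‖w‖ < ‖z‖) {r : ℝ} (hr : 0 < r)
    (h : IsMinOn (reducedSqDist k z w) (Ioi 0) r) : 1 < r := by
  rcases lt_trichotomy r 1 with hlt | rfl | hgt
  · have hnorm : ‖scaledSum z w r‖ < ‖scaledSum z w r⁻¹‖ :=
      norm_scaledSum_lt hzw hr ((one_lt_inv₀ hr).2 hlt |>.trans' hlt) (mul_inv_cancel₀ hr.ne').ge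
    have hle : reducedSqDist k z w r ≤ reducedSqDist k z w r⁻¹ := h (mem_Ioi.2 (inv_pos.2 hr))
    simp only [reducedSqDist, inv_inv] at hle
    nlinarith
  · have hcrit := norm_scaledSum_mul_of_isLocalMin one_pos (scaledSum_ne_zero hzw le_rfl)
      (h.isLocalMin (Ioi_mem_nhds one_pos))
    have : 0 < ‖z‖ ^ 2 - ‖w‖ ^ 2 := by nlinarith [norm_nonneg w]
    nlinarith
  · exact hgt

lemma eq_of_norm_scaledSum_mul (hk : 0 < k) (hzw : ‖w‖ < ‖z‖) {s t : ℝ} (hs : 1 < s)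
    (ht : 1 < t) (hcs : ‖scaledSum z w s‖ * (s ^ 4 - 1) = k * (s ^ 4 * ‖z‖ ^ 2 - ‖w‖ ^ 2))
    (hct : ‖scaledSum z w t‖ * (t ^ 4 - 1) = k * (t ^ 4 * ‖z‖ ^ 2 - ‖w‖ ^ 2)) : s = t := by
  by_contra hne
  wlog hst : s < t generalizing s t
  · exact this ht hs hct hcs (Ne.symm hne) ((Ne.symm hne).lt_of_le (not_lt.1 hst))
  have hsol : ∀ r, 1 < r → ‖scaledSum z w r‖ * (r ^ 4 - 1) = k * (r ^ 4 * ‖z‖ ^ 2 - ‖w‖ ^ 2) →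
      ‖scaledSum z w r‖ = k * ‖z‖ ^ 2 + k * (‖z‖ ^ 2 - ‖w‖ ^ 2) / (r ^ 4 - 1) := by
    intro r hr hc
    have : 0 < r ^ 4 - 1 := by nlinarith [one_lt_pow₀ hr (n := 4) (by norm_num)]
    field_simp
    linear_combination hc
  have hnorm := norm_scaledSum_lt hzw (one_pos.trans hs) hst (by nlinarith)
  rw [hsol s hs hcs, hsol t ht hct] at hnorm
  have hs4 : 0 < s ^ 4 - 1 := by nlinarith [one_lt_pow₀ hs (n := 4) (by norm_num)]
  have hst4 : s ^ 4 - 1 < t ^ 4 - 1 := by gcongr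
  have hkzw : 0 < k * (‖z‖ ^ 2 - ‖w‖ ^ 2) := mul_pos hk (by nlinarith [norm_nonneg w])
  have := div_lt_div_of_pos_left hkzw hs4 hst4
  linarith

lemma eq_of_isMinOn_of_norm_lt (hk : 0 < k) (hzw : ‖w‖ < ‖z‖) {r₁ r₂ : ℝ} (hr₁ : 0 < r₁)
    (hr₂ : 0 < r₂) (h₁ : IsMinOn (reducedSqDist k z w) (Ioi 0) r₁)
    (h₂ : IsMinOn (reducedSqDist k z w) (Ioi 0) r₂) : r₁ = r₂ := by
  have hcrit : ∀ r, 0 < r → IsMinOn (reducedSqDist k z w) (Ioi 0) r →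
      1 < r ∧ ‖scaledSum z w r‖ * (r ^ 4 - 1) = k * (r ^ 4 * ‖z‖ ^ 2 - ‖w‖ ^ 2) :=
    fun r hr h => have h1 := one_lt_of_isMinOn hk hzw hr h
      ⟨h1, norm_scaledSum_mul_of_isLocalMin hr (scaledSum_ne_zero hzw h1.le)
        (h.isLocalMin (Ioi_mem_nhds hr))⟩
  obtain ⟨h1₁, hc₁⟩ := hcrit r₁ hr₁ h₁
  obtain ⟨h1₂, hc₂⟩ := hcrit r₂ hr₂ h₂
  exact eq_of_norm_scaledSum_mul hk hzw h1₁ h1₂ hc₁ hc₂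

lemma eq_of_isMinOn (hk : 0 < k) (hzw : ‖z‖ ≠ ‖w‖) {r₁ r₂ : ℝ} (hr₁ : 0 < r₁)
    (hr₂ : 0 < r₂) (h₁ : IsMinOn (reducedSqDist k z w) (Ioi 0) r₁)
    (h₂ : IsMinOn (reducedSqDist k z w) (Ioi 0) r₂) : r₁ = r₂ := by
  rcases hzw.lt_or_gt with hlt | hgt
  · exact inv_injective <| eq_of_isMinOn_of_norm_lt hk hlt (inv_pos.2 hr₁) (inv_pos.2 hr₂)
      (isMinOn_reducedSqDist_inv h₁) (isMinOn_reducedSqDist_inv h₂)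
  · exact eq_of_isMinOn_of_norm_lt hk hgt hr₁ hr₂ h₁ h₂

lemma scaledSum_ne_zero_of_isMinOn (hk : 0 < k) (hzw : ‖z‖ ≠ ‖w‖) {r : ℝ} (hr : 0 < r)
    (h : IsMinOn (reducedSqDist k z w) (Ioi 0) r) : scaledSum z w r ≠ 0 := by
  rcases hzw.lt_or_gt with hlt | hgt
  · rw [← scaledSum_inv]
    exact scaledSum_ne_zero hlt
      (one_lt_of_isMinOn hk hlt (inv_pos.2 hr) (isMinOn_reducedSqDist_inv h)).le
  · exact scaledSum_ne_zero hgt (one_lt_of_isMinOn hk hgt hr h).le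

end ScaledSum

lemma dist_pt_sq (z₁ w₁ z₂ w₂ : ℂ) :
    dist (pt z₁ w₁) (pt z₂ w₂) ^ 2 = ‖z₁ - z₂‖ ^ 2 + ‖w₁ - w₂‖ ^ 2 := by
  rw [EuclideanSpace.dist_eq, Real.sq_sqrt (by positivity), Fin.sum_univ_two,
    dist_eq_norm, dist_eq_norm]
  rfl

lemma gpt_eq_pt (r θ : ℝ) :
    gpt r θ = pt ((√2 / 2 * r) • exp (θ * I)) ((√2 / 2 * r⁻¹) • exp (θ * I)) := by
  simp only [gpt, Complex.real_smul]

lemma dist_gpt_pt_sq (r θ : ℝ) (z w : ℂ) :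
    dist (gpt r θ) (pt z w) ^ 2
      = ‖z‖ ^ 2 + ‖w‖ ^ 2 + (r ^ 2 + r⁻¹ ^ 2) / 2 - √2 * ⟪exp (θ * I), scaledSum z w r⟫ := by
  have h2 : √2 ^ 2 = 2 := Real.sq_sqrt zero_le_two
  rw [gpt_eq_pt, dist_pt_sq, norm_sub_sq_real, norm_sub_sq_real, norm_smul, norm_smul,
    norm_exp_ofReal_mul_I, real_inner_smul_left, real_inner_smul_left, scaledSum,
    inner_add_right, real_inner_smul_right, real_inner_smul_right, Real.norm_eq_abs,
    Real.norm_eq_abs, mul_one, mul_one, sq_abs, sq_abs]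
  linear_combination (r ^ 2 + r⁻¹ ^ 2) / 4 * h2

lemma inner_exp_arg_mul_I (v : ℂ) : ⟪exp (arg v * I), v⟫ = ‖v‖ := by
  calc ⟪exp (arg v * I), v⟫ = ⟪exp (arg v * I), ‖v‖ • exp (arg v * I)⟫ := by
        rw [Complex.real_smul, norm_mul_exp_arg_mul_I]
    _ = ‖v‖ := by
        rw [real_inner_smul_right, real_inner_self_eq_norm_sq, norm_exp_ofReal_mul_I, one_pow,
          mul_one]

lemma add_reducedSqDist_le_dist_gpt_sq (r θ : ℝ) (z w : ℂ) :
    ‖z‖ ^ 2 + ‖w‖ ^ 2 + reducedSqDist √2 z w r ≤ dist (gpt r θ) (pt z w) ^ 2 := by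
  have := real_inner_le_norm (exp (θ * I)) (scaledSum z w r)
  rw [norm_exp_ofReal_mul_I, one_mul] at this
  rw [dist_gpt_pt_sq, reducedSqDist]
  nlinarith [Real.sqrt_nonneg 2]

lemma dist_gpt_arg_sq (r : ℝ) (z w : ℂ) :
    dist (gpt r (arg (scaledSum z w r))) (pt z w) ^ 2
      = ‖z‖ ^ 2 + ‖w‖ ^ 2 + reducedSqDist √2 z w r := by
  rw [dist_gpt_pt_sq, inner_exp_arg_mul_I, reducedSqDist]
  ring

section Closest

variable {r θ : ℝ} {z w : ℂ}

lemma dist_gpt_sq_le_of_dist_eq_infDist (hd : dist (gpt r θ) (pt z w) = infDist (pt z w) Gam)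
    {r' : ℝ} (hr' : 0 < r') (θ' : ℝ) :
    dist (gpt r θ) (pt z w) ^ 2 ≤ dist (gpt r' θ') (pt z w) ^ 2 := by
  gcongr
  rw [hd, dist_comm]
  exact infDist_le_dist_of_mem ⟨r', θ', hr', rfl⟩

lemma isMinOn_reducedSqDist_of_dist_eq_infDist
    (hd : dist (gpt r θ) (pt z w) = infDist (pt z w) Gam) :
    IsMinOn (reducedSqDist √2 z w) (Ioi 0) r := fun r' hr' => by
  have := (add_reducedSqDist_le_dist_gpt_sq r θ z w).trans
    (dist_gpt_sq_le_of_dist_eq_infDist hd hr' (arg (scaledSum z w r')))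
  rw [dist_gpt_arg_sq] at this
  exact le_of_add_le_add_left this

lemma norm_smul_exp_eq_scaledSum_of_dist_eq_infDist (hr : 0 < r)
    (hd : dist (gpt r θ) (pt z w) = infDist (pt z w) Gam) :
    ‖scaledSum z w r‖ • exp (θ * I) = scaledSum z w r := by
  have hle := dist_gpt_sq_le_of_dist_eq_infDist hd hr (arg (scaledSum z w r))
  rw [dist_gpt_arg_sq, dist_gpt_pt_sq, reducedSqDist] at hle
  have hinner : ⟪exp (θ * I), scaledSum z w r⟫ = ‖exp (θ * I)‖ * ‖scaledSum z w r‖ :=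
    (real_inner_le_norm _ _).antisymm <| by
      rw [norm_exp_ofReal_mul_I, one_mul]
      nlinarith [Real.sqrt_pos.2 (zero_lt_two (α := ℝ))]
  rw [inner_eq_norm_mul_iff_real.1 hinner, norm_exp_ofReal_mul_I, one_smul]

end Closest

/-- If ρ₁ ≠ ρ₂ then the closest point of P = (ρ₁ e^{iθ₁}, ρ₂ e^{iθ₂}) on Γ is
unique. -/
theorem unique_closest_point_of_ne (ρ₁ ρ₂ θ₁ θ₂ : ℝ) (h1 : 0 ≤ ρ₁) (h2 : 0 ≤ ρ₂)
    (hne : ρ₁ ≠ ρ₂) (P₁ P₂ : C2) (hP₁ : P₁ ∈ Gam) (hP₂ : P₂ ∈ Gam)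
    (hd₁ : dist P₁ (ppt ρ₁ θ₁ ρ₂ θ₂) = Metric.infDist (ppt ρ₁ θ₁ ρ₂ θ₂) Gam)
    (hd₂ : dist P₂ (ppt ρ₁ θ₁ ρ₂ θ₂) = Metric.infDist (ppt ρ₁ θ₁ ρ₂ θ₂) Gam) :
    P₁ = P₂ := by
  obtain ⟨r₁, φ₁, hr₁, rfl⟩ := hP₁
  obtain ⟨r₂, φ₂, hr₂, rfl⟩ := hP₂
  have hzw : ‖(ρ₁ : ℂ) * exp (θ₁ * I)‖ ≠ ‖(ρ₂ : ℂ) * exp (θ₂ * I)‖ := by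
    rwa [norm_mul, norm_mul, norm_exp_ofReal_mul_I, norm_exp_ofReal_mul_I, mul_one, mul_one,
      norm_real, norm_real, Real.norm_of_nonneg h1, Real.norm_of_nonneg h2]
  have hk : (0 : ℝ) < √2 := by positivity
  have hmin₁ := isMinOn_reducedSqDist_of_dist_eq_infDist hd₁
  obtain rfl : r₁ = r₂ := eq_of_isMinOn hk hzw hr₁ hr₂ hmin₁
    (isMinOn_reducedSqDist_of_dist_eq_infDist hd₂)
  have hexp : exp (φ₁ * I) = exp (φ₂ * I) :=
    smul_right_injective ℂ (norm_ne_zero_iff.2 (scaledSum_ne_zero_of_isMinOn hk hzw hr₁ hmin₁))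
      ((norm_smul_exp_eq_scaledSum_of_dist_eq_infDist hr₁ hd₁).trans
        (norm_smul_exp_eq_scaledSum_of_dist_eq_infDist hr₁ hd₂).symm)
  rw [gpt_eq_pt, gpt_eq_pt, hexp]

end
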